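/- arXiv:2407.16941 — 6 statements merged into one kernel-verified Lean document; each statement's English description precedes it below -/
import Mathlib

section
/- In an almost normal frame, the rather below relation coincides with the completely below relation: b ≺ a implies b ≪ a (and hence ≺ = ≪). -/
/-! Finite `ℚ`-indexed `≺`-chains from `b` at `0` to `a` at `1` form a preorder under extension.
Any `q ∈ (0,1)` can be added to such a chain by interpolating between the values at its nearest
neighbours; transitivity of `≺` (as `b ≺ a` forces `b ≤ a`) takes care of all other indices.
By the Rasiowa–Sikorski lemma, an ideal meeting each of the countably many cofinal sets
"`q` is in the domain" glues to a family defined on all of `ℚ ∩ [0,1]`. -/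

/-- `b` is completely below `a`: there is a `ℚ ∩ [0,1]`-indexed family interpolating
between `b` and `a` with respect to the rather below relation. -/
def CompletelyBelow {L : Type*} [Order.Frame L] (b a : L) : Prop :=
  ∃ c : ℚ → L, c 0 = b ∧ c 1 = a ∧
    ∀ p q : ℚ, p ∈ Set.Icc (0 : ℚ) 1 → q ∈ Set.Icc (0 : ℚ) 1 → p < q → (c p)ᶜ ⊔ c q = ⊤

/-- `b ≺ a`. -/
def RatherBelow {L : Type*} [Order.Frame L] (b a : L) : Prop :=
  bᶜ ⊔ a = ⊤

namespace RatherBelow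

variable {L : Type*} [Order.Frame L] {b x a : L}

theorem le (h : RatherBelow b a) : b ≤ a :=
  himp_eq_top_iff.mp (top_le_iff.mp (h ▸ compl_sup_le_himp))

theorem trans (h₁ : RatherBelow b x) (h₂ : RatherBelow x a) : RatherBelow b a :=
  top_le_iff.mp (h₁ ▸ sup_le_sup_left h₂.le _)

instance : IsTrans L RatherBelow :=
  ⟨fun _ _ _ => trans⟩

end RatherBelow

structure FiniteRatChain {β : Type*} (R : β → β → Prop) (b a : β) where
  dom : Finset ℚ
  val : ℚ → β
  zero_mem : 0 ∈ dom
  one_mem : 1 ∈ dom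
  val_zero : val 0 = b
  val_one : val 1 = a
  rel : ∀ p ∈ dom, ∀ q ∈ dom, p < q → R (val p) (val q)

namespace FiniteRatChain

variable {β : Type*} {R : β → β → Prop} {b a : β}

instance : Preorder (FiniteRatChain R b a) where
  le f g := f.dom ⊆ g.dom ∧ ∀ q ∈ f.dom, f.val q = g.val q
  le_refl _ := ⟨subset_rfl, fun _ _ => rfl⟩
  le_trans _ _ _ hfg hgh :=
    ⟨hfg.1.trans hgh.1, fun q hq => (hfg.2 q hq).trans (hgh.2 q (hfg.1 hq))⟩

theorem val_eq_of_le {f g : FiniteRatChain R b a} (hfg : f ≤ g) {q : ℚ} (hq : q ∈ f.dom) :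
    f.val q = g.val q :=
  hfg.2 q hq

variable (R b a) in
def pair (hba : R b a) : FiniteRatChain R b a where
  dom := {0, 1}
  val q := if q = 0 then b else a
  zero_mem := by simp
  one_mem := by simp
  val_zero := if_pos rfl
  val_one := if_neg one_ne_zero
  rel p hp q hq hpq := by
    simp only [Finset.mem_insert, Finset.mem_singleton] at hp hq
    rcases hp with rfl | rfl <;> rcases hq with rfl | rfl <;> norm_num at hpq
    simpa using hba

variable [IsTrans β R] (f : FiniteRatChain R b a)

theorem rel_of_rel_of_le {y : β} {p q : ℚ} (hp : p ∈ f.dom) (hq : q ∈ f.dom) (hpq : p ≤ q)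
    (h : R y (f.val p)) : R y (f.val q) := by
  rcases hpq.eq_or_lt with rfl | hpq
  · exact h
  · exact _root_.trans h (f.rel p hp q hq hpq)

theorem rel_of_le_of_rel {y : β} {p q : ℚ} (hp : p ∈ f.dom) (hq : q ∈ f.dom) (hpq : p ≤ q)
    (h : R (f.val q) y) : R (f.val p) y := by
  rcases hpq.eq_or_lt with rfl | hpq
  · exact h
  · exact _root_.trans (f.rel p hp q hq hpq) h

def insertBetween {q u v : ℚ} {x : β} (hq : q ∉ f.dom) (hu : u ∈ f.dom) (hv : v ∈ f.dom)
    (hu_max : ∀ p ∈ f.dom, p < q → p ≤ u) (hv_min : ∀ p ∈ f.dom, q < p → v ≤ p)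
    (hux : R (f.val u) x) (hxv : R x (f.val v)) : FiniteRatChain R b a where
  dom := insert q f.dom
  val := Function.update f.val q x
  zero_mem := Finset.mem_insert_of_mem f.zero_mem
  one_mem := Finset.mem_insert_of_mem f.one_mem
  val_zero := by rw [Function.update_of_ne (ne_of_mem_of_not_mem f.zero_mem hq), f.val_zero]
  val_one := by rw [Function.update_of_ne (ne_of_mem_of_not_mem f.one_mem hq), f.val_one]
  rel p hp r hr hpr := by
    have update_of_mem {s} (hs : s ∈ f.dom) : Function.update f.val q x s = f.val s :=
      Function.update_of_ne (ne_of_mem_of_not_mem hs hq) _ _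
    rcases Finset.mem_insert.mp hp with rfl | hp <;>
      rcases Finset.mem_insert.mp hr with hrp | hr
    · exact absurd (hrp ▸ hpr) (lt_irrefl _)
    · rw [Function.update_self, update_of_mem hr]
      exact f.rel_of_rel_of_le hv hr (hv_min r hr hpr) hxv
    · rw [hrp] at hpr ⊢
      rw [Function.update_self, update_of_mem hp]
      exact f.rel_of_le_of_rel hp hu (hu_max p hp hpr) hux
    · rw [update_of_mem hp, update_of_mem hr]
      exact f.rel p hp r hr hpr

theorem le_insertBetween {q u v : ℚ} {x : β} (hq : q ∉ f.dom) (hu : u ∈ f.dom)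
    (hv : v ∈ f.dom)
    (hu_max : ∀ p ∈ f.dom, p < q → p ≤ u) (hv_min : ∀ p ∈ f.dom, q < p → v ≤ p)
    (hux : R (f.val u) x) (hxv : R x (f.val v)) :
    f ≤ f.insertBetween hq hu hv hu_max hv_min hux hxv :=
  ⟨Finset.subset_insert _ _, fun _ hs =>
    (Function.update_of_ne (ne_of_mem_of_not_mem hs hq) _ _).symm⟩

theorem exists_le_mem_dom (hR : ∀ x y, R x y → ∃ z, R x z ∧ R z y) {q : ℚ}
    (hq : q ∈ Set.Icc (0 : ℚ) 1) : ∃ g : FiniteRatChain R b a, f ≤ g ∧ q ∈ g.dom := by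
  by_cases hqf : q ∈ f.dom
  · exact ⟨f, le_rfl, hqf⟩
  have hq0 : 0 < q := hq.1.lt_of_ne fun h => hqf (h ▸ f.zero_mem)
  have hq1 : q < 1 := hq.2.lt_of_ne fun h => hqf (h.symm ▸ f.one_mem)
  set below := f.dom.filter (· < q)
  set above := f.dom.filter (q < ·)
  have hbelow : below.Nonempty := ⟨0, Finset.mem_filter.mpr ⟨f.zero_mem, hq0⟩⟩
  have habove : above.Nonempty := ⟨1, Finset.mem_filter.mpr ⟨f.one_mem, hq1⟩⟩
  obtain ⟨hu, huq⟩ := Finset.mem_filter.mp (below.max'_mem hbelow)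
  obtain ⟨hv, hqv⟩ := Finset.mem_filter.mp (above.min'_mem habove)
  have hu_max : ∀ p ∈ f.dom, p < q → p ≤ below.max' hbelow := fun p hp hpq =>
    below.le_max' p (Finset.mem_filter.mpr ⟨hp, hpq⟩)
  have hv_min : ∀ p ∈ f.dom, q < p → above.min' habove ≤ p := fun p hp hqp =>
    above.min'_le p (Finset.mem_filter.mpr ⟨hp, hqp⟩)
  obtain ⟨x, hux, hxv⟩ := hR _ _ (f.rel _ hu _ hv (huq.trans hqv))
  exact ⟨f.insertBetween hqf hu hv hu_max hv_min hux hxv,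
    f.le_insertBetween hqf hu hv hu_max hv_min hux hxv, Finset.mem_insert_self q f.dom⟩

variable (R b a) in
def cofinalDom (hR : ∀ x y, R x y → ∃ z, R x z ∧ R z y) (q : ℚ) :
    Order.Cofinal (FiniteRatChain R b a) where
  carrier := {g | q ∈ Set.Icc (0 : ℚ) 1 → q ∈ g.dom}
  isCofinal f := by
    by_cases hq : q ∈ Set.Icc (0 : ℚ) 1
    · obtain ⟨g, hfg, hg⟩ := f.exists_le_mem_dom hR hq
      exact ⟨g, fun _ => hg, hfg⟩
    · exact ⟨f, fun h => absurd h hq, le_rfl⟩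

end FiniteRatChain

theorem exists_rat_chain_of_interpolates {β : Type*} {R : β → β → Prop} [IsTrans β R]
    (hR : ∀ x y, R x y → ∃ z, R x z ∧ R z y) {b a : β} (hba : R b a) :
    ∃ c : ℚ → β, c 0 = b ∧ c 1 = a ∧
      ∀ p q : ℚ, p ∈ Set.Icc (0 : ℚ) 1 → q ∈ Set.Icc (0 : ℚ) 1 → p < q →
        R (c p) (c q) := by
  let p₀ := FiniteRatChain.pair R b a hba
  let 𝒟 := FiniteRatChain.cofinalDom R b a hR
  choose g hg_dom hg_mem using Order.cofinal_meets_idealOfCofinals p₀ 𝒟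
  refine ⟨fun q => (g q).val q, (g 0).val_zero, (g 1).val_one, fun p q hp hq hpq => ?_⟩
  obtain ⟨h, -, hph, hqh⟩ :=
    (Order.idealOfCofinals p₀ 𝒟).directed (g p) (hg_mem p) (g q) (hg_mem q)
  have hp' := hg_dom p hp
  have hq' := hg_dom q hq
  change R ((g p).val p) ((g q).val q)
  rw [FiniteRatChain.val_eq_of_le hph hp', FiniteRatChain.val_eq_of_le hqh hq']
  exact h.rel p (hph.1 hp') q (hqh.1 hq') hpq

/-- In an almost normal frame (one where `≺` interpolates), `b ≺ a` implies `b ≪ a`. -/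
theorem rather_below_eq_completely_below_of_almost_normal {L : Type*} [Order.Frame L]
    (hAN : ∀ a b : L, bᶜ ⊔ a = ⊤ → ∃ x : L, bᶜ ⊔ x = ⊤ ∧ xᶜ ⊔ a = ⊤) :
    ∀ a b : L, bᶜ ⊔ a = ⊤ → CompletelyBelow b a :=
  fun _ _ hba =>
    exists_rat_chain_of_interpolates (R := RatherBelow) (fun x y => hAN y x) hba
end

section
/- Let h : M → L be a frame homomorphism with right adjoint f : L → M. Then f preserves the completely below relation (a ≪ b in L implies f(a) ≪ f(b) in M) if and only if for every x ∈ M and every a ∈ L with a ≪ h(x)* there exists c ∈ M with a ≤ h(c) and c ≪ x*. -/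
section Helpers

variable {α : Type*} [Order.Frame α]

/-- From a cover `u ⊔ v = ⊤`, enlarging both parts keeps a cover. -/
private lemma cover_mono {u v u' v' : α} (hc : u ⊔ v = ⊤) (h1 : u ≤ u') (h2 : v ≤ v') :
    u' ⊔ v' = ⊤ := by
  rw [eq_top_iff, ← hc]
  exact sup_le_sup h1 h2

private lemma mem01 {r : ℚ} (h1 : 0 ≤ r) (h2 : r ≤ 1) : r ∈ Set.Icc (0 : ℚ) 1 :=
  Set.mem_Icc.mpr ⟨h1, h2⟩

/-- A scale is monotone on `[0,1]`. -/
private lemma scale_le {c : ℚ → α}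
    (hcov : ∀ p q : ℚ, p ∈ Set.Icc (0 : ℚ) 1 → q ∈ Set.Icc (0 : ℚ) 1 → p < q →
      (c p)ᶜ ⊔ c q = ⊤)
    {p q : ℚ} (hp : p ∈ Set.Icc (0 : ℚ) 1) (hq : q ∈ Set.Icc (0 : ℚ) 1) (hpq : p ≤ q) :
    c p ≤ c q := by
  rcases eq_or_lt_of_le hpq with rfl | hlt
  · exact le_rfl
  · have H := hcov p q hp hq hlt
    calc c p = c p ⊓ ((c p)ᶜ ⊔ c q) := by rw [H, inf_top_eq]
    _ = (c p ⊓ (c p)ᶜ) ⊔ (c p ⊓ c q) := inf_sup_left _ _ _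
    _ ≤ c q := by rw [inf_compl_self]; simp

/-- From a cover `uᶜ ⊔ v = ⊤` we get `uᶜᶜ ≤ v`. -/
private lemma compl_compl_le_of_cover {u v : α} (hc : uᶜ ⊔ v = ⊤) : uᶜᶜ ≤ v := by
  calc uᶜᶜ = uᶜᶜ ⊓ (uᶜ ⊔ v) := by rw [hc, inf_top_eq]
  _ = (uᶜᶜ ⊓ uᶜ) ⊔ (uᶜᶜ ⊓ v) := inf_sup_left _ _ _
  _ ≤ v := by rw [inf_comm, inf_compl_self]; simp

end Helpers

/-- The completely below relation dualizes under pseudocomplements. -/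
private lemma CompletelyBelow.dual {α : Type*} [Order.Frame α] {b a : α}
    (hba : CompletelyBelow b a) : CompletelyBelow (aᶜ) (bᶜ) := by
  obtain ⟨c, c0, c1, ccov⟩ := hba
  refine ⟨fun q => (c (1 - q))ᶜ, by norm_num [c1], by norm_num [c0], ?_⟩
  intro p q hp hq hpq
  obtain ⟨hp0, hp1⟩ := hp
  obtain ⟨hq0, hq1⟩ := hq
  dsimp only
  have hcv := ccov (1 - q) (1 - p) (mem01 (by linarith) (by linarith))
    (mem01 (by linarith) (by linarith)) (by linarith)
  rw [sup_comm]
  exact cover_mono hcv le_rfl le_compl_compl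

/-- A frame homomorphism maps pseudocomplements below pseudocomplements. -/
private lemma hom_compl_le {L M : Type*} [Order.Frame L] [Order.Frame M]
    (h : FrameHom M L) (u : M) : (h uᶜ : L) ≤ (h u : L)ᶜ := by
  refine le_compl_iff_disjoint_right.mpr (disjoint_iff.mpr ?_)
  rw [← map_inf, inf_comm, inf_compl_self, map_bot]

/-- The right adjoint `f` of a frame homomorphism `h : M → L` preserves the completely
below relation iff for every `x : M` and `a : L` with `a ≪ (h x)ᶜ` there is `c : M` with
`a ≤ h c` and `c ≪ xᶜ`. -/
theorem cb_preserving_iff {L M : Type*} [Order.Frame L] [Order.Frame M]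
    (h : FrameHom M L) (f : L → M) (gc : GaloisConnection h f) :
    (∀ a b : L, CompletelyBelow a b → CompletelyBelow (f a) (f b)) ↔
    (∀ (x : M) (a : L), CompletelyBelow a ((h x)ᶜ) →
      ∃ c : M, a ≤ h c ∧ CompletelyBelow c (xᶜ)) := by
  constructor
  · -- Forward direction
    intro P x a hax
    obtain ⟨H, H0, H1, Hcov⟩ := P _ _ hax.dual
    -- `H` is a scale from `f ((h x)ᶜᶜ)` to `f (aᶜ)`.
    refine ⟨(H (1/2))ᶜ, ?_, ?_⟩
    · -- a ≤ h ((H (1/2))ᶜ)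
      have hc : (H (1/2))ᶜ ⊔ H (3/4) = ⊤ :=
        Hcov _ _ (mem01 (by norm_num) (by norm_num)) (mem01 (by norm_num) (by norm_num))
          (by norm_num)
      have hh : (h ((H (1/2))ᶜ) : L) ⊔ h (H (3/4)) = ⊤ := by
        rw [← map_sup, hc, map_top]
      have h34 : (h (H (3/4)) : L) ≤ aᶜ := by
        have hle : H (3/4) ≤ H 1 :=
          scale_le Hcov (mem01 (by norm_num) (by norm_num))
            (mem01 (by norm_num) (by norm_num)) (by norm_num)
        calc (h (H (3/4)) : L) ≤ h (H 1) := gc.monotone_l hle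
        _ = h (f (aᶜ)) := by rw [H1]
        _ ≤ aᶜ := gc.l_u_le _
      calc a = a ⊓ ((h ((H (1/2))ᶜ) : L) ⊔ h (H (3/4))) := by rw [hh, inf_top_eq]
      _ = (a ⊓ h ((H (1/2))ᶜ)) ⊔ (a ⊓ h (H (3/4))) := inf_sup_left _ _ _
      _ ≤ h ((H (1/2))ᶜ) ⊔ ⊥ := by
          refine sup_le_sup inf_le_right ?_
          calc a ⊓ h (H (3/4)) ≤ a ⊓ aᶜ := inf_le_inf_left a h34
          _ = ⊥ := inf_compl_self a
      _ = h ((H (1/2))ᶜ) := sup_bot_eq _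
    · -- CompletelyBelow ((H (1/2))ᶜ) (xᶜ)
      refine ⟨fun r => if r < 1 then (H ((1 - r)/2))ᶜ else xᶜ, by norm_num, by norm_num, ?_⟩
      intro p q hp hq hpq
      obtain ⟨hp0, hp1⟩ := hp
      obtain ⟨hq0, hq1⟩ := hq
      dsimp only
      have hp' : p < 1 := lt_of_lt_of_le hpq hq1
      by_cases hq' : q < 1
      · rw [if_pos hp', if_pos hq']
        have hcv := Hcov ((1 - q)/2) ((1 - p)/2)
          (mem01 (by linarith) (by linarith)) (mem01 (by linarith) (by linarith))
          (by linarith)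
        rw [sup_comm]
        exact cover_mono hcv le_rfl le_compl_compl
      · rw [if_pos hp', if_neg hq']
        have hcv := Hcov ((1 - p)/4) ((1 - p)/2)
          (mem01 (by linarith) (by linarith)) (mem01 (by linarith) (by linarith))
          (by linarith)
        have hx1 : x ≤ H ((1 - p)/4) := by
          have h1 : x ≤ f ((h x : L)ᶜᶜ) :=
            le_trans (gc.le_u_l x) (gc.monotone_u le_compl_compl)
          have h2 : x ≤ H 0 := by rw [H0]; exact h1
          exact le_trans h2 (scale_le Hcov (mem01 le_rfl (by norm_num))
            (mem01 (by linarith) (by linarith)) (by linarith))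
        rw [sup_comm]
        exact cover_mono hcv (compl_le_compl hx1) le_compl_compl
  · -- Backward direction
    intro Q a b hab
    obtain ⟨s, s0, s1, scov⟩ := hab
    -- Premise for Q at x := f (s (1/4)):
    have hpre : CompletelyBelow ((s (1/2))ᶜ) ((h (f (s (1/4))) : L)ᶜ) := by
      refine ⟨fun r => if r < 1 then (s ((2 - r)/4))ᶜ else (h (f (s (1/4))) : L)ᶜ,
        by norm_num, by norm_num, ?_⟩
      intro p q hp hq hpq
      obtain ⟨hp0, hp1⟩ := hp
      obtain ⟨hq0, hq1⟩ := hq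
      dsimp only
      have hp' : p < 1 := lt_of_lt_of_le hpq hq1
      by_cases hq' : q < 1
      · rw [if_pos hp', if_pos hq']
        have hcv := scov ((2 - q)/4) ((2 - p)/4)
          (mem01 (by linarith) (by linarith)) (mem01 (by linarith) (by linarith))
          (by linarith)
        rw [sup_comm]
        exact cover_mono hcv le_rfl le_compl_compl
      · rw [if_pos hp', if_neg hq']
        have hcv := scov ((3 - p)/8) ((2 - p)/4)
          (mem01 (by linarith) (by linarith)) (mem01 (by linarith) (by linarith))
          (by linarith)
        have hle : (h (f (s (1/4))) : L) ≤ s ((3 - p)/8) :=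
          le_trans (gc.l_u_le _) (scale_le scov (mem01 (by norm_num) (by norm_num))
            (mem01 (by linarith) (by linarith)) (by linarith))
        rw [sup_comm]
        exact cover_mono hcv (compl_le_compl hle) le_compl_compl
    obtain ⟨cM, hcM, K, K0, K1, Kcov⟩ := Q (f (s (1/4))) ((s (1/2))ᶜ) hpre
    -- `K` is a scale from `cM` to `(f (s (1/4)))ᶜ`, and `(s (1/2))ᶜ ≤ h cM`.
    have fact_i : ∀ β ∈ Set.Icc (0 : ℚ) 1, K β ≤ (f a)ᶜ := by
      intro β hβ
      have h1 : K β ≤ (f (s (1/4)))ᶜ := by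
        rw [← K1]
        exact scale_le Kcov hβ (mem01 (by norm_num) (by norm_num)) hβ.2
      have h2 : f a ≤ f (s (1/4)) := by
        refine gc.monotone_u ?_
        rw [← s0]
        exact scale_le scov (mem01 le_rfl (by norm_num))
          (mem01 (by norm_num) (by norm_num)) (by norm_num)
      exact le_trans h1 (compl_le_compl h2)
    have fact_ii : ∀ β ∈ Set.Icc (0 : ℚ) 1, (K β)ᶜ ≤ f b := by
      intro β hβ
      have h1 : cM ≤ K β := by
        rw [← K0]
        exact scale_le Kcov (mem01 le_rfl (by norm_num)) hβ hβ.1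
      have h5 : ((h cM : L))ᶜ ≤ (s (1/2))ᶜᶜ := compl_le_compl hcM
      have h6 : (s (1/2))ᶜᶜ ≤ s (3/4) :=
        compl_compl_le_of_cover (scov (1/2) (3/4) (mem01 (by norm_num) (by norm_num))
          (mem01 (by norm_num) (by norm_num)) (by norm_num))
      have h7 : s (3/4) ≤ b := by
        rw [← s1]
        exact scale_le scov (mem01 (by norm_num) (by norm_num))
          (mem01 (by norm_num) (by norm_num)) (by norm_num)
      refine gc.le_u ?_
      calc (h ((K β)ᶜ) : L) ≤ h (cMᶜ) := gc.monotone_l (compl_le_compl h1)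
      _ ≤ (h cM : L)ᶜ := hom_compl_le h cM
      _ ≤ s (3/4) := le_trans h5 h6
      _ ≤ b := h7
    refine ⟨fun r => if r = 0 then f a else if r = 1 then f b else (K (1 - r))ᶜ,
      by norm_num, by norm_num, ?_⟩
    intro p q hp hq hpq
    obtain ⟨hp0, hp1⟩ := hp
    obtain ⟨hq0, hq1⟩ := hq
    dsimp only
    have hq0' : q ≠ 0 := ne_of_gt (lt_of_le_of_lt hp0 hpq)
    by_cases hp' : p = 0
    · by_cases hq'' : q = 1
      · rw [if_pos hp', if_neg hq0', if_pos hq'']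
        have hcv := Kcov (1/4) (1/2) (mem01 (by norm_num) (by norm_num))
          (mem01 (by norm_num) (by norm_num)) (by norm_num)
        rw [sup_comm]
        exact cover_mono hcv (fact_ii _ (mem01 (by norm_num) (by norm_num)))
          (fact_i _ (mem01 (by norm_num) (by norm_num)))
      · rw [if_pos hp', if_neg hq0', if_neg hq'']
        have hq1' : q < 1 := lt_of_le_of_ne hq1 hq''
        have hq0'' : 0 < q := lt_of_le_of_lt hp0 hpq
        have hcv := Kcov (1 - q) (1 - q/2)
          (mem01 (by linarith) (by linarith)) (mem01 (by linarith) (by linarith))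
          (by linarith)
        rw [sup_comm]
        exact cover_mono hcv le_rfl (fact_i _ (mem01 (by linarith) (by linarith)))
    · have hp0'' : 0 < p := lt_of_le_of_ne hp0 (Ne.symm hp')
      have hp1' : p < 1 := lt_of_lt_of_le hpq hq1
      by_cases hq'' : q = 1
      · rw [if_neg hp', if_neg (ne_of_lt hp1'), if_neg hq0', if_pos hq'']
        have hcv := Kcov ((1 - p)/2) (1 - p)
          (mem01 (by linarith) (by linarith)) (mem01 (by linarith) (by linarith))
          (by linarith)
        rw [sup_comm]
        exact cover_mono hcv (fact_ii _ (mem01 (by linarith) (by linarith))) le_compl_compl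
      · rw [if_neg hp', if_neg (ne_of_lt hp1'), if_neg hq0', if_neg hq'']
        have hq1' : q < 1 := lt_of_le_of_ne hq1 hq''
        have hcv := Kcov (1 - q) (1 - p)
          (mem01 (by linarith) (by linarith)) (mem01 (by linarith) (by linarith))
          (by linarith)
        rw [sup_comm]
        exact cover_mono hcv le_rfl le_compl_compl
end

section
/- Let M be a subfit frame and f : L → M a localic map with left adjoint h. Then f is closed (f(a ∨ h(b)) = f(a) ∨ b for all a ∈ L, b ∈ M) if and only if for all a ∈ L and b ∈ M, f(a ∨ h(b)) = 1 implies f(a) ∨ b = 1. -/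
/-!
The inequality `f a ⊔ b ≤ f (a ⊔ h b)` holds for every Galois connection, so closedness
only asks for the reverse one. In a subfit frame `x ≤ y` as soon as every `c` with
`x ⊔ c = ⊤` also has `y ⊔ c = ⊤`. For `x = f (a ⊔ h b)`, such a `c` gives
`⊤ = f (a ⊔ h b) ⊔ c ≤ f (a ⊔ h (b ⊔ c))`, and the hypothesis turns this into `f a ⊔ b ⊔ c = ⊤`.
-/

def IsSubfit (M : Type*) [Lattice M] [OrderTop M] : Prop :=
  ∀ a b : M, ¬ a ≤ b → ∃ c : M, a ⊔ c = ⊤ ∧ b ⊔ c ≠ ⊤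

theorem IsSubfit.le_of_forall_sup_eq_top {M : Type*} [Lattice M] [OrderTop M]
    (hM : IsSubfit M) {x y : M} (hxy : ∀ c, x ⊔ c = ⊤ → y ⊔ c = ⊤) : x ≤ y := by
  by_contra hle
  obtain ⟨c, hxc, hyc⟩ := hM x y hle
  exact hyc (hxy c hxc)

theorem GaloisConnection.u_sup_le_u_sup_l {α β : Type*} [SemilatticeSup α] [SemilatticeSup β]
    {l : β → α} {u : α → β} (gc : GaloisConnection l u) (a : α) (b : β) :
    u a ⊔ b ≤ u (a ⊔ l b) :=
  sup_le (gc.monotone_u le_sup_left) ((gc.le_u_l b).trans (gc.monotone_u le_sup_right))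

/-- For a subfit frame `M` and a localic map `f : L → M` with left adjoint `h`,
`f` is closed iff `f (a ⊔ h b) = ⊤` implies `f a ⊔ b = ⊤`. -/
theorem closed_iff_of_subfit {L M : Type*} [Order.Frame L] [Order.Frame M]
    (hsub : ∀ a b : M, ¬ a ≤ b → ∃ c : M, a ⊔ c = ⊤ ∧ b ⊔ c ≠ ⊤)
    (h : FrameHom M L) (f : L → M) (gc : GaloisConnection h f) :
    (∀ (a : L) (b : M), f (a ⊔ h b) = f a ⊔ b) ↔
    (∀ (a : L) (b : M), f (a ⊔ h b) = ⊤ → f a ⊔ b = ⊤) := by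
  refine ⟨fun hclosed a b htop => hclosed a b ▸ htop, fun H a b => ?_⟩
  refine le_antisymm ?_ (gc.u_sup_le_u_sup_l a b)
  refine IsSubfit.le_of_forall_sup_eq_top hsub fun c hc => ?_
  have hbc : f (a ⊔ h (b ⊔ c)) = ⊤ := by
    refine top_le_iff.mp (hc ▸ ?_)
    simpa only [map_sup, sup_assoc] using gc.u_sup_le_u_sup_l (a ⊔ h b) c
  simpa only [sup_assoc] using H a (b ⊔ c) hbc
end

section
/- A frame L is extremally disconnected (a* ∨ a** = 1 for all a ∈ L) if and only if for every pair a, b ∈ L with a ∧ b = 0 there exists a complemented element c with a ≤ c and c ∧ b = 0. -/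
/-!
If `aᶜ ⊔ aᶜᶜ = ⊤`, the regular element `aᶜᶜ` is complemented (its pseudocomplement is `aᶜ`), lies
above `a`, and misses everything disjoint from `a`. Conversely, separating `a` from `aᶜ` by a
complemented `c` squeezes `c` between `a` and `aᶜᶜ`, which forces `cᶜ = aᶜ`, so
`⊤ = c ⊔ cᶜ ≤ aᶜᶜ ⊔ aᶜ`.
-/

section HeytingAlgebra

variable {α : Type*} [HeytingAlgebra α] {a b c : α}

theorem exists_complemented_le_disjoint_of_compl_sup_compl_compl (ha : aᶜ ⊔ aᶜᶜ = ⊤)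
    (hab : Disjoint a b) : ∃ c : α, c ⊔ cᶜ = ⊤ ∧ a ≤ c ∧ Disjoint c b :=
  ⟨aᶜᶜ, by rwa [compl_compl_compl, sup_comm], le_compl_compl,
    disjoint_compl_compl_left_iff.2 hab⟩

theorem compl_sup_compl_compl_of_complemented_le_disjoint (hc : c ⊔ cᶜ = ⊤) (hac : a ≤ c)
    (hca : Disjoint c aᶜ) : aᶜ ⊔ aᶜᶜ = ⊤ := by
  have hc_le : c ≤ aᶜᶜ := le_compl_iff_disjoint_right.2 hca
  have hcompl_le : cᶜ ≤ aᶜ := compl_le_compl hac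
  refine top_le_iff.1 ?_
  calc ⊤ = c ⊔ cᶜ := hc.symm
    _ ≤ aᶜᶜ ⊔ aᶜ := sup_le_sup hc_le hcompl_le
    _ = aᶜ ⊔ aᶜᶜ := sup_comm _ _

end HeytingAlgebra

/-- A frame is extremally disconnected (`aᶜ ⊔ aᶜᶜ = ⊤` for all `a`) iff any two disjoint
elements can be separated by a complemented element. -/
theorem extremally_disconnected_iff {L : Type*} [Order.Frame L] :
    (∀ a : L, aᶜ ⊔ aᶜᶜ = ⊤) ↔
    (∀ a b : L, a ⊓ b = ⊥ → ∃ c : L, c ⊔ cᶜ = ⊤ ∧ a ≤ c ∧ c ⊓ b = ⊥) := by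
  simp only [← disjoint_iff]
  constructor
  · intro h a b hab
    exact exists_complemented_le_disjoint_of_compl_sup_compl_compl (h a) hab
  · intro h a
    obtain ⟨c, hc, hac, hca⟩ := h a aᶜ disjoint_compl_right
    exact compl_sup_compl_compl_of_complemented_le_disjoint hc hac hca
end

section
/- Let h : M → L be a frame homomorphism with right adjoint f : L → M. Define: f is an SₒTₒλ-map if for all a ∈ M and b ∈ L with h(a) ∧ b = 0 there exists d ∈ M with a ∧ d = 0 and b ≤ h(d). Then f is an SₒTₒλ-map if and only if h is nearly open, i.e., h(a*) = h(a)* for all a ∈ M. -/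
section HeytingHom

variable {α β F : Type*} [HeytingAlgebra α] [HeytingAlgebra β] [FunLike F α β]

theorem map_compl_le_compl_map [InfHomClass F α β] [BotHomClass F α β] (h : F) (a : α) :
    h aᶜ ≤ (h a)ᶜ := by
  rw [le_compl_iff_disjoint_left, disjoint_iff, ← map_inf, inf_compl_self, map_bot]

-- `aᶜ` is the largest element disjoint from `a`, so it is the best choice of `d`,
-- and `(h a)ᶜ` is the most demanding choice of `b`.
theorem exists_disjoint_le_map_iff_compl_map_le [OrderHomClass F α β] (h : F) :
    (∀ (a : α) (b : β), h a ⊓ b = ⊥ → ∃ d : α, a ⊓ d = ⊥ ∧ b ≤ h d) ↔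
      ∀ a : α, (h a)ᶜ ≤ h aᶜ := by
  constructor
  · intro hdisj a
    obtain ⟨d, had, hd⟩ := hdisj a (h a)ᶜ (inf_compl_self _)
    exact hd.trans (OrderHomClass.mono h (le_compl_iff_disjoint_left.2 (disjoint_iff.2 had)))
  · intro hcompl a b hab
    exact ⟨aᶜ, inf_compl_self a,
      (le_compl_iff_disjoint_left.2 (disjoint_iff.2 hab)).trans (hcompl a)⟩

end HeytingHom

theorem SoTo_lambda_iff_nearly_open_general {L M : Type*} [Order.Frame L] [Order.Frame M]
    (h : FrameHom M L) :
    (∀ (a : M) (b : L), h a ⊓ b = ⊥ → ∃ d : M, a ⊓ d = ⊥ ∧ b ≤ h d) ↔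
    (∀ a : M, h (aᶜ) = (h a)ᶜ) :=
  (exists_disjoint_le_map_iff_compl_map_le h).trans <|
    forall_congr' fun a => (map_compl_le_compl_map h a).ge_iff_eq

/-- The right adjoint `f` of a frame homomorphism `h : M → L` is an `𝔖ₒ𝔗ₒλ`-map
(whenever `h a ⊓ b = ⊥` there is `d : M` with `a ⊓ d = ⊥` and `b ≤ h d`)
iff `h` is nearly open (`h (aᶜ) = (h a)ᶜ` for all `a`). -/
theorem SoTo_lambda_iff_nearly_open {L M : Type*} [Order.Frame L] [Order.Frame M]
    (h : FrameHom M L) (f : L → M) (gc : GaloisConnection h f) :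
    (∀ (a : M) (b : L), h a ⊓ b = ⊥ → ∃ d : M, a ⊓ d = ⊥ ∧ b ≤ h d) ↔
    (∀ a : M, h (aᶜ) = (h a)ᶜ) :=
  SoTo_lambda_iff_nearly_open_general h
end

section
/- Let h : M → L be a nearly open frame homomorphism with right adjoint f. Then for all a ∈ M and b ∈ L with h(a) ∧ b* = 0, one has a ∧ f(b**)* = 0 and b* ≤ h(f(b**)*). -/
section HeytingAlgebra

variable {α β : Type*} [HeytingAlgebra α] [HeytingAlgebra β] {l : α → β} {u : β → α}

theorem GaloisConnection.inf_compl_u_compl_compl_eq_bot (gc : GaloisConnection l u) {a : α}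
    {b : β} (hab : l a ⊓ bᶜ = ⊥) : a ⊓ (u bᶜᶜ)ᶜ = ⊥ := by
  have hle : a ≤ u bᶜᶜ := gc.le_iff_le.mp (le_compl_iff_disjoint_right.mpr (disjoint_iff.mpr hab))
  exact disjoint_iff.mp (disjoint_compl_right.mono_left hle)

theorem GaloisConnection.compl_le_l_compl_u (gc : GaloisConnection l u)
    (hl : ∀ a : α, l aᶜ = (l a)ᶜ) (c : β) : cᶜ ≤ l (u c)ᶜ :=
  hl (u c) ▸ compl_le_compl (gc.l_u_le c)

end HeytingAlgebra

/-- If `h : M → L` is a nearly open frame homomorphism with right adjoint `f`, then for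
all `a : M` and `b : L` with `h a ⊓ bᶜ = ⊥`, one has `a ⊓ (f (bᶜᶜ))ᶜ = ⊥` and
`bᶜ ≤ h ((f (bᶜᶜ))ᶜ)`. -/
theorem nearly_open_SoTro {L M : Type*} [Order.Frame L] [Order.Frame M]
    (h : FrameHom M L) (f : L → M) (gc : GaloisConnection h f)
    (hno : ∀ a : M, h (aᶜ) = (h a)ᶜ) :
    ∀ (a : M) (b : L), h a ⊓ bᶜ = ⊥ →
      a ⊓ (f (bᶜᶜ))ᶜ = ⊥ ∧ bᶜ ≤ h ((f (bᶜᶜ))ᶜ) := by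
  intro a b hab
  refine ⟨gc.inf_compl_u_compl_compl_eq_bot hab, ?_⟩
  simpa only [compl_compl_compl] using gc.compl_le_l_compl_u hno bᶜᶜ
end
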